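/- Let H be a non-negative almost increasing function on [0, R₀] (with constant K_H) and let F be a positive function on (0, R₀]. Suppose (1) there exist constants A, B, ε, β > 0 such that H(ρ) ≤ (A(ρ/R)^β + ε)H(R) + B·F(R) for all 0 < ρ ≤ R ≤ R₀, and (2) there exists γ ∈ (0, β) such that the function ρ ↦ ρ^γ / F(ρ) is almost increasing on (0, R₀] (with constant K). Then there exist ε₀ = ε₀(A, β, γ) > 0 and C = C(A, β, γ, K_H, K) > 0 such that if ε < ε₀, then H(ρ) ≤ C·(F(ρ)/F(R))·H(R) + C·B·F(ρ) for all 0 < ρ ≤ R ≤ R₀. -/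

import Mathlib

/-- A function `h` is *almost increasing* on a set `s` with constant `K ≥ 1` if
`h x ≤ K * h y` whenever `x ≤ y` in `s`. -/
def AlmostIncreasingOn (h : ℝ → ℝ) (s : Set ℝ) (K : ℝ) : Prop :=
  1 ≤ K ∧ ∀ ⦃x⦄, x ∈ s → ∀ ⦃y⦄, y ∈ s → x ≤ y → h x ≤ K * h y

/-!
Fix a ratio `σ ∈ (0, 1)` so small that `A σ^β ≤ σ^γ / 4`. For `ε < σ^γ / 4` the hypothesis gives
the one-step decay `H (σ s) ≤ (σ^γ / 2) H s + B F s`. Iterating along the scales `σ^k R` bounds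
`H (σ^k R)` by `(σ^γ / 2)^k H R` plus a sum of the `F (σ^j R)` with geometric weights; since
`ρ^γ / F ρ` is almost increasing, `F (σ^j R) ≤ K σ^(-γ (k - j)) F (σ^k R)`, so that sum is a
geometric series of ratio `1 / 2` times `F (σ^k R)`. A general `ρ` lies in some
`(σ^(k+1) R, σ^k R]`, where `H` and `F` are comparable to their values at `σ^k R`.
-/

open Finset Filter Topology

theorem le_pow_mul_add_sum_of_le_mul_add {a : ℝ} {u c : ℕ → ℝ} (ha : 0 ≤ a)
    (hu : ∀ k, u (k + 1) ≤ a * u k + c k) (n : ℕ) :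
    u n ≤ a ^ n * u 0 + ∑ j ∈ range n, a ^ j * c (n - 1 - j) := by
  induction n with
  | zero => simp
  | succ n ih =>
    have hsum : ∑ j ∈ range (n + 1), a ^ j * c (n + 1 - 1 - j)
        = a * ∑ j ∈ range n, a ^ j * c (n - 1 - j) + c n := by
      rw [sum_range_succ', mul_sum]
      refine congrArg₂ _ (sum_congr rfl fun j _ => ?_) (by simp)
      rw [show n + 1 - 1 - (j + 1) = n - 1 - j by omega, pow_succ']
      ring
    rw [hsum]
    calc u (n + 1) ≤ a * u n + c n := hu n
      _ ≤ a * (a ^ n * u 0 + ∑ j ∈ range n, a ^ j * c (n - 1 - j)) + c n := by gcongr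
      _ = _ := by ring

theorem sum_pow_mul_le_of_pow_mul_le {a b K : ℝ} {f : ℕ → ℝ} {n : ℕ} (ha : 0 ≤ a) (hab : a < b)
    (hKf : 0 ≤ K * f n) (hf : ∀ j < n, b ^ (j + 1) * f (n - 1 - j) ≤ K * f n) :
    ∑ j ∈ range n, a ^ j * f (n - 1 - j) ≤ K / (b - a) * f n := by
  have hb : 0 < b := ha.trans_lt hab
  calc ∑ j ∈ range n, a ^ j * f (n - 1 - j)
      = ∑ j ∈ range n, (a / b) ^ j / b * (b ^ (j + 1) * f (n - 1 - j)) := by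
        refine sum_congr rfl fun j _ => ?_
        rw [div_pow, pow_succ]
        field_simp
    _ ≤ ∑ j ∈ Ico 0 n, (a / b) ^ j / b * (K * f n) := by
        rw [← range_eq_Ico]
        exact sum_le_sum fun j hj =>
          mul_le_mul_of_nonneg_left (hf j (mem_range.1 hj)) (by positivity)
    _ = (∑ j ∈ Ico 0 n, (a / b) ^ j) * (K * f n / b) := by
        rw [sum_mul]
        exact sum_congr rfl fun j _ => by ring
    _ ≤ (a / b) ^ 0 / (1 - a / b) * (K * f n / b) := by
        gcongr
        exact geom_sum_Ico_le_of_lt_one (by positivity) ((div_lt_one hb).2 hab)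
    _ = K / (b - a) * f n := by
        field_simp

theorem le_of_le_mul_add_of_pow_mul_le {a b K B : ℝ} {u f : ℕ → ℝ} (ha : 0 ≤ a) (hab : a < b)
    (hK : 0 ≤ K) (hB : 0 ≤ B) (hu₀ : 0 ≤ u 0) (hf : ∀ k, 0 < f k)
    (hu : ∀ k, u (k + 1) ≤ a * u k + B * f k)
    (hfb : ∀ i j, i ≤ j → b ^ (j - i) * f i ≤ K * f j) (n : ℕ) :
    u n ≤ K * (f n / f 0) * u 0 + K / (b - a) * B * f n := by
  have hpow : a ^ n ≤ K * (f n / f 0) := by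
    rw [mul_div_assoc', le_div_iff₀ (hf 0)]
    calc a ^ n * f 0 ≤ b ^ (n - 0) * f 0 := by
          rw [Nat.sub_zero]
          gcongr
          exact (hf 0).le
      _ ≤ K * f n := hfb 0 n n.zero_le
  have hsum : ∑ j ∈ range n, a ^ j * f (n - 1 - j) ≤ K / (b - a) * f n := by
    refine sum_pow_mul_le_of_pow_mul_le ha hab (mul_nonneg hK (hf n).le) fun j hj => ?_
    convert hfb (n - 1 - j) n (by omega) using 3
    omega
  calc u n ≤ a ^ n * u 0 + ∑ j ∈ range n, a ^ j * (B * f (n - 1 - j)) :=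
        le_pow_mul_add_sum_of_le_mul_add ha hu n
    _ = a ^ n * u 0 + B * ∑ j ∈ range n, a ^ j * f (n - 1 - j) := by
        rw [mul_sum]
        exact congrArg _ (sum_congr rfl fun j _ => by ring)
    _ ≤ K * (f n / f 0) * u 0 + B * (K / (b - a) * f n) := by gcongr
    _ = K * (f n / f 0) * u 0 + K / (b - a) * B * f n := by ring

theorem exists_mul_rpow_le_mul_rpow (A : ℝ) {β γ c : ℝ} (hγβ : γ < β) (hc : 0 < c) :
    ∃ σ, 0 < σ ∧ σ < 1 ∧ A * σ ^ β ≤ c * σ ^ γ := by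
  have hδ : 0 < β - γ := sub_pos.2 hγβ
  have hlim : Tendsto (fun σ : ℝ => A * σ ^ (β - γ)) (𝓝[>] 0) (𝓝 0) := by
    have := ((Real.continuousAt_rpow_const 0 _ (Or.inr hδ.le)).tendsto.const_mul A).mono_left
      (nhdsWithin_le_nhds (s := Set.Ioi 0))
    simpa [Real.zero_rpow hδ.ne'] using this
  obtain ⟨σ, hσc, hσ⟩ := ((hlim.eventually (ge_mem_nhds hc)).and (Ioo_mem_nhdsGT one_pos)).exists
  refine ⟨σ, hσ.1, hσ.2, ?_⟩
  calc A * σ ^ β = A * σ ^ (β - γ) * σ ^ γ := by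
        rw [mul_assoc, ← Real.rpow_add hσ.1, sub_add_cancel]
    _ ≤ c * σ ^ γ := mul_le_mul_of_nonneg_right hσc (Real.rpow_nonneg hσ.1.le γ)

theorem pow_mul_mem_Ioc {σ R R₀ : ℝ} (hσ0 : 0 < σ) (hσ1 : σ ≤ 1) (hR : R ∈ Set.Ioc 0 R₀)
    (k : ℕ) : σ ^ k * R ∈ Set.Ioc 0 R₀ :=
  ⟨mul_pos (pow_pos hσ0 k) hR.1, (mul_le_of_le_one_left hR.1.le (pow_le_one₀ hσ0.le hσ1)).trans hR.2⟩

namespace AlmostIncreasingOn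

variable {γ K R₀ : ℝ} {F : ℝ → ℝ}

theorem div_rpow_mul_le {s : Set ℝ}
    (h : AlmostIncreasingOn (fun ρ => ρ ^ γ / F ρ) s K) (hF : ∀ ρ ∈ s, 0 < F ρ)
    {x y : ℝ} (hx : x ∈ s) (hy : y ∈ s) (hx0 : 0 < x) (hxy : x ≤ y) :
    (x / y) ^ γ * F y ≤ K * F x := by
  have hy0 := hx0.trans_le hxy
  have hFx := hF x hx
  have hFy := hF y hy
  calc (x / y) ^ γ * F y = x ^ γ / F x * (F x * F y / y ^ γ) := by
        rw [Real.div_rpow hx0.le hy0.le]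
        field_simp
    _ ≤ K * (y ^ γ / F y) * (F x * F y / y ^ γ) := by
        gcongr
        exact h.2 hx hy hxy
    _ = K * F x := by field_simp

theorem rpow_mul_le_of_mul_le {s : Set ℝ} (h : AlmostIncreasingOn (fun ρ => ρ ^ γ / F ρ) s K)
    (hF : ∀ ρ ∈ s, 0 < F ρ) (hγ : 0 ≤ γ) {σ x y : ℝ} (hσ : 0 ≤ σ) (hx : x ∈ s) (hy : y ∈ s)
    (hx0 : 0 < x) (hxy : x ≤ y) (hσxy : σ * y ≤ x) :
    σ ^ γ * F y ≤ K * F x := by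
  have hy0 := hx0.trans_le hxy
  calc σ ^ γ * F y ≤ (x / y) ^ γ * F y := by
        gcongr
        · exact (hF y hy).le
        · rwa [le_div_iff₀ hy0]
    _ ≤ K * F x := h.div_rpow_mul_le hF hx hy hx0 hxy

theorem rpow_pow_mul_le (h : AlmostIncreasingOn (fun ρ => ρ ^ γ / F ρ) (Set.Ioc 0 R₀) K)
    (hF : ∀ ρ ∈ Set.Ioc 0 R₀, 0 < F ρ) {σ R : ℝ} (hσ0 : 0 < σ) (hσ1 : σ ≤ 1)
    (hR : R ∈ Set.Ioc 0 R₀) {i j : ℕ} (hij : i ≤ j) :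
    (σ ^ γ) ^ (j - i) * F (σ ^ i * R) ≤ K * F (σ ^ j * R) := by
  have hratio : σ ^ j * R / (σ ^ i * R) = σ ^ (j - i) := by
    rw [mul_div_mul_right _ _ hR.1.ne', pow_sub₀ σ hσ0.ne' hij, div_eq_mul_inv]
  have := h.div_rpow_mul_le hF (pow_mul_mem_Ioc hσ0 hσ1 hR j) (pow_mul_mem_Ioc hσ0 hσ1 hR i)
    (pow_mul_mem_Ioc hσ0 hσ1 hR j).1
    (mul_le_mul_of_nonneg_right (pow_le_pow_of_le_one hσ0.le hσ1 hij) hR.1.le)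
  rwa [hratio, ← Real.rpow_pow_comm hσ0.le] at this

end AlmostIncreasingOn

theorem le_of_le_mul_add_at_scale {γ K K_H R₀ B a σ : ℝ} {H F : ℝ → ℝ} (hγ : 0 ≤ γ)
    (hσ0 : 0 < σ) (hσ1 : σ < 1) (ha : 0 ≤ a) (hab : a < σ ^ γ) (hB : 0 ≤ B)
    (hH₀ : ∀ ρ ∈ Set.Icc 0 R₀, 0 ≤ H ρ) (hH : AlmostIncreasingOn H (Set.Icc 0 R₀) K_H)
    (hF : ∀ ρ ∈ Set.Ioc 0 R₀, 0 < F ρ)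
    (hFγ : AlmostIncreasingOn (fun ρ => ρ ^ γ / F ρ) (Set.Ioc 0 R₀) K)
    (hstep : ∀ s ∈ Set.Ioc 0 R₀, H (σ * s) ≤ a * H s + B * F s)
    {ρ R : ℝ} (hρ : 0 < ρ) (hρR : ρ ≤ R) (hRR₀ : R ≤ R₀) :
    H ρ ≤ K_H * (K / σ ^ γ) * (K * (F ρ / F R) * H R + K / (σ ^ γ - a) * B * F ρ) := by
  have hR : R ∈ Set.Ioc 0 R₀ := ⟨hρ.trans_le hρR, hRR₀⟩
  have hρ_mem : ρ ∈ Set.Ioc 0 R₀ := ⟨hρ, hρR.trans hRR₀⟩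
  have hscale := pow_mul_mem_Ioc hσ0 hσ1.le hR
  have hb0 : 0 < σ ^ γ := Real.rpow_pos_of_pos hσ0 γ
  have hiter := le_of_le_mul_add_of_pow_mul_le (u := fun k => H (σ ^ k * R))
    (f := fun k => F (σ ^ k * R)) ha hab (zero_le_one.trans hFγ.1) hB
    (hH₀ _ (Set.Ioc_subset_Icc_self (hscale 0))) (fun k => hF _ (hscale k))
    (fun k => by simpa only [pow_succ', mul_assoc] using hstep _ (hscale k))
    (fun i j hij => hFγ.rpow_pow_mul_le hF hσ0 hσ1.le hR hij)
  simp only [pow_zero, one_mul] at hiter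
  obtain ⟨k, hk₁, hk₂⟩ :=
    exists_nat_pow_near_of_lt_one (div_pos hρ hR.1) ((div_le_one hR.1).2 hρR) hσ0 hσ1
  rw [lt_div_iff₀ hR.1, pow_succ', mul_assoc] at hk₁
  rw [div_le_iff₀ hR.1] at hk₂
  have hFk : F (σ ^ k * R) ≤ K / σ ^ γ * F ρ := by
    rw [div_mul_eq_mul_div, le_div_iff₀' hb0]
    exact hFγ.rpow_mul_le_of_mul_le hF hγ hσ0.le hρ_mem (hscale k) hρ hk₂ hk₁.le
  have hFR : 0 < F R := hF R hR
  have hHR : 0 ≤ H R := hH₀ R (Set.Ioc_subset_Icc_self hR)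
  have hFk0 := (hF _ (hscale k)).le
  have hK_H0 : 0 ≤ K_H := zero_le_one.trans hH.1
  have hK0 : 0 ≤ K := zero_le_one.trans hFγ.1
  calc H ρ ≤ K_H * H (σ ^ k * R) :=
        hH.2 (Set.Ioc_subset_Icc_self hρ_mem) (Set.Ioc_subset_Icc_self (hscale k)) hk₂
    _ ≤ K_H * (K * (F (σ ^ k * R) / F R) * H R + K / (σ ^ γ - a) * B * F (σ ^ k * R)) := by
        gcongr
        exact hiter k
    _ ≤ K_H * (K * (K / σ ^ γ * F ρ / F R) * H R + K / (σ ^ γ - a) * B * (K / σ ^ γ * F ρ)) := by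
        have := sub_pos.2 hab
        gcongr
    _ = K_H * (K / σ ^ γ) * (K * (F ρ / F R) * H R + K / (σ ^ γ - a) * B * F ρ) := by ring

theorem almost_increasing_iteration_general
    (A β γ : ℝ) (hγ0 : 0 < γ) (hγβ : γ < β) :
    ∃ ε₀ > 0, ∀ K_H K : ℝ, 1 ≤ K_H → 1 ≤ K → ∃ C > 0,
      ∀ (R₀ : ℝ) (H F : ℝ → ℝ) (B ε : ℝ), 0 < R₀ → 0 < B → 0 < ε →
        (∀ ρ ∈ Set.Icc (0 : ℝ) R₀, 0 ≤ H ρ) →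
        AlmostIncreasingOn H (Set.Icc 0 R₀) K_H →
        (∀ ρ ∈ Set.Ioc (0 : ℝ) R₀, 0 < F ρ) →
        (∀ ρ R : ℝ, 0 < ρ → ρ ≤ R → R ≤ R₀ →
          H ρ ≤ (A * (ρ / R) ^ β + ε) * H R + B * F R) →
        AlmostIncreasingOn (fun ρ => ρ ^ γ / F ρ) (Set.Ioc 0 R₀) K →
        ε < ε₀ →
        ∀ ρ R : ℝ, 0 < ρ → ρ ≤ R → R ≤ R₀ →
          H ρ ≤ C * (F ρ / F R) * H R + C * B * F ρ := by
  obtain ⟨σ, hσ0, hσ1, hAσ⟩ :=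
    exists_mul_rpow_le_mul_rpow A hγβ (by norm_num : (0 : ℝ) < 1 / 4)
  set b := σ ^ γ
  have hb0 : 0 < b := Real.rpow_pos_of_pos hσ0 γ
  have hb1 : b ≤ 1 := Real.rpow_le_one hσ0.le hσ1.le hγ0.le
  refine ⟨b / 4, by positivity, fun K_H K _ hK => ⟨K_H * (K / b) * (K * 2 / b), by positivity, ?_⟩⟩
  intro R₀ H F B ε _ hB _ hH₀ hH hF hHF hFγ hε ρ R hρ hρR hRR₀
  have hstep : ∀ s ∈ Set.Ioc 0 R₀, H (σ * s) ≤ b / 2 * H s + B * F s := fun s hs => by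
    calc H (σ * s) ≤ (A * (σ * s / s) ^ β + ε) * H s + B * F s :=
          hHF _ _ (mul_pos hσ0 hs.1) (mul_le_of_le_one_left hs.1.le hσ1.le) hs.2
      _ ≤ b / 2 * H s + B * F s := by
          rw [mul_div_cancel_right₀ σ hs.1.ne']
          gcongr
          · exact hH₀ s (Set.Ioc_subset_Icc_self hs)
          · linarith
  have key := le_of_le_mul_add_at_scale hγ0.le hσ0 hσ1 (by positivity) (by linarith : b / 2 < b)
    hB.le hH₀ hH hF hFγ hstep hρ hρR hRR₀
  rw [show b - b / 2 = b / 2 by ring, div_div_eq_mul_div] at key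
  have hK_le : K ≤ K * 2 / b := by
    rw [le_div_iff₀ hb0]
    nlinarith
  have hHR : 0 ≤ H R := hH₀ R ⟨(hρ.trans_le hρR).le, hRR₀⟩
  have hFρR : 0 ≤ F ρ / F R :=
    div_nonneg (hF ρ ⟨hρ, hρR.trans hRR₀⟩).le (hF R ⟨hρ.trans_le hρR, hRR₀⟩).le
  calc H ρ ≤ K_H * (K / b) * (K * (F ρ / F R) * H R + K * 2 / b * B * F ρ) := key
    _ ≤ K_H * (K / b) * (K * 2 / b * (F ρ / F R) * H R + K * 2 / b * B * F ρ) := by gcongr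
    _ = _ := by ring

/-- **Iteration lemma.** Let `H` be a non-negative almost increasing function on `[0, R₀]`
(with constant `K_H`) and `F` a positive function on `(0, R₀]`.  If
`H ρ ≤ (A (ρ/R)^β + ε) H R + B F R` for `0 < ρ ≤ R ≤ R₀`, and `ρ ↦ ρ^γ / F ρ` is
almost increasing on `(0, R₀]` (with constant `K`) for some `γ ∈ (0, β)`, then there exist
`ε₀ = ε₀(A, β, γ) > 0` and `C = C(A, β, γ, K_H, K) > 0` such that whenever `ε < ε₀`,
`H ρ ≤ C (F ρ / F R) H R + C B F ρ` for all `0 < ρ ≤ R ≤ R₀`. -/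
theorem almost_increasing_iteration
    (A β γ : ℝ) (hA : 0 < A) (hβ : 0 < β) (hγ0 : 0 < γ) (hγβ : γ < β) :
    ∃ ε₀ > 0, ∀ K_H K : ℝ, 1 ≤ K_H → 1 ≤ K → ∃ C > 0,
      ∀ (R₀ : ℝ) (H F : ℝ → ℝ) (B ε : ℝ), 0 < R₀ → 0 < B → 0 < ε →
        (∀ ρ ∈ Set.Icc (0 : ℝ) R₀, 0 ≤ H ρ) →
        AlmostIncreasingOn H (Set.Icc 0 R₀) K_H →
        (∀ ρ ∈ Set.Ioc (0 : ℝ) R₀, 0 < F ρ) →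
        (∀ ρ R : ℝ, 0 < ρ → ρ ≤ R → R ≤ R₀ →
          H ρ ≤ (A * (ρ / R) ^ β + ε) * H R + B * F R) →
        AlmostIncreasingOn (fun ρ => ρ ^ γ / F ρ) (Set.Ioc 0 R₀) K →
        ε < ε₀ →
        ∀ ρ R : ℝ, 0 < ρ → ρ ≤ R → R ≤ R₀ →
          H ρ ≤ C * (F ρ / F R) * H R + C * B * F ρ :=
  almost_increasing_iteration_general A β γ hγ0 hγβ
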